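/- Let (n_k) be lacunary with ratio α > 1 and σ_n the Fejér mean on L²(ℝ). Then for every choice of signs ε_k ∈ {−1, 1} the series ∑_{k=1}^{∞} ε_k (σ_{n_{k+1}} f − σ_{n_k} f) converges in L²(ℝ) for all f ∈ L²(ℝ), with norm bounded by C‖f‖₂ for a constant C depending only on α. -/

import Mathlib

open MeasureTheory FourierTransform

/-- Fejér multiplier symbol. -/
noncomputable def fejerSymbol (n : ℕ) (x : ℝ) : ℝ := max 0 (1 - |x| / (n + 1))

/-!
The partial sums `∑_{k ≤ N} ε_k (σ_{n_{k+1}} f - σ_{n_k} f)` are Fourier multipliers whose symbols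
`∑_{k ≤ N} ε_k (K̂_{n_{k+1}} - K̂_{n_k})` are dominated, since the Fejér symbols increase with `n`,
by the telescoping sum `∑_k (K̂_{n_{k+1}} - K̂_{n_k}) ≤ 1`; the tail from `a` on is dominated by
`1 - K̂_{n_{a+1}}` in the same way. By Plancherel the partial sums are therefore bounded by `‖f‖₂`,
and their tails by `‖(1 - K̂_{n_{a+1}}) f̂‖₂`, which tends to `0` by dominated convergence because
`n_k → ∞`. Hence the partial sums are Cauchy, with `C = 1`.
-/

open Filter Topology Finset
open scoped ENNReal

lemma fejerSymbol_nonneg (m : ℕ) (x : ℝ) : 0 ≤ fejerSymbol m x := le_max_left _ _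

lemma fejerSymbol_le_one (m : ℕ) (x : ℝ) : fejerSymbol m x ≤ 1 :=
  max_le zero_le_one (sub_le_self _ (by positivity))

lemma fejerSymbol_monotone (x : ℝ) : Monotone (fejerSymbol · x) := fun m m' h =>
  max_le_max le_rfl <| sub_le_sub_left
    (div_le_div_of_nonneg_left (abs_nonneg x) (by positivity) (by gcongr)) 1

lemma continuous_fejerSymbol (m : ℕ) : Continuous (fejerSymbol m) := by
  unfold fejerSymbol
  fun_prop

lemma tendsto_fejerSymbol_atTop (x : ℝ) : Tendsto (fejerSymbol · x) atTop (𝓝 1) := by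
  have h : Tendsto (fun m : ℕ => 1 - |x| / ((m : ℝ) + 1)) atTop (𝓝 1) := by
    simpa using tendsto_const_nhds.sub <| tendsto_const_nhds.div_atTop <|
      tendsto_natCast_atTop_atTop.atTop_add (tendsto_const_nhds (x := (1 : ℝ)))
  have := (tendsto_const_nhds (x := (0 : ℝ)) (f := (atTop : Filter ℕ))).max h
  rwa [max_eq_right zero_le_one] at this

lemma abs_sum_Ioc_mul_sub_le {u : ℕ → ℝ} (hu : Monotone u) (hu_le : ∀ k, u k ≤ 1)
    {ε : ℕ → ℝ} (hε : ∀ k, |ε k| ≤ 1) (a b : ℕ) :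
    |∑ k ∈ Ioc a b, ε k * (u (k + 1) - u k)| ≤ 1 - u (a + 1) := by
  calc |∑ k ∈ Ioc a b, ε k * (u (k + 1) - u k)|
      ≤ ∑ k ∈ Ioc a b, (u (k + 1) - u k) := by
        refine (abs_sum_le_sum_abs _ _).trans (sum_le_sum fun k _ => ?_)
        have hk : 0 ≤ u (k + 1) - u k := sub_nonneg.2 (hu k.le_succ)
        rw [abs_mul, abs_of_nonneg hk]
        exact mul_le_of_le_one_left hk (hε k)
    _ ≤ 1 - u (a + 1) := by
        rcases le_total a b with hab | hba
        · rw [← Ico_add_one_add_one_eq_Ioc, sum_Ico_sub u (by omega)]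
          linarith [hu_le (b + 1)]
        · rw [Ioc_eq_empty (by omega), sum_empty]
          linarith [hu_le (a + 1)]

lemma strictMono_of_lacunary {n : ℕ → ℕ} (hn : ∀ k, 0 < n k) {α : ℝ} (hα : 1 < α)
    (hlac : ∀ k, α ≤ (n (k + 1) : ℝ) / n k) : StrictMono n :=
  strictMono_nat_of_lt_succ fun k => by
    have hk : (0 : ℝ) < n k := by exact_mod_cast hn k
    exact_mod_cast (lt_mul_of_one_lt_left hk hα).trans_le ((le_div_iff₀ hk).1 (hlac k))

section Lp

variable {α E : Type*} [MeasurableSpace α] {μ : Measure α} [NormedAddCommGroup E]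
  [NormedSpace ℝ E] {p : ℝ≥0∞}

lemma eLpNorm_smul_le_of_abs_le_one {c : α → ℝ} (hc : ∀ x, |c x| ≤ 1) (g : α → E) :
    eLpNorm (fun x => c x • g x) p μ ≤ eLpNorm g p μ :=
  eLpNorm_mono fun x => by
    rw [norm_smul, Real.norm_eq_abs]
    exact mul_le_of_le_one_left (norm_nonneg _) (hc x)

theorem tendsto_eLpNorm_smul_of_tendsto_zero (hp : p ≠ ∞) {g : α → E} (hg : MemLp g p μ)
    {c : ℕ → α → ℝ} (hc : ∀ M, AEStronglyMeasurable (c M) μ) (hc_le : ∀ M x, |c M x| ≤ 1)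
    (hc_lim : ∀ x, Tendsto (c · x) atTop (𝓝 0)) :
    Tendsto (fun M => eLpNorm (fun x => c M x • g x) p μ) atTop (𝓝 0) := by
  rcases eq_or_ne p 0 with rfl | hp0
  · simp
  have hp_pos : 0 < p.toReal := ENNReal.toReal_pos hp0 hp
  simp_rw [eLpNorm_eq_lintegral_rpow_enorm_toReal hp0 hp]
  have hlim : Tendsto (fun M => ∫⁻ x, ‖c M x • g x‖ₑ ^ p.toReal ∂μ) atTop (𝓝 0) := by
    have := tendsto_lintegral_of_dominated_convergence'
      (F := fun M x => ‖c M x • g x‖ₑ ^ p.toReal) (f := fun _ => 0)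
      (fun x => ‖g x‖ₑ ^ p.toReal)
      (fun M => ((hc M).smul hg.1).enorm.pow_const _)
      (fun M => .of_forall fun x => by
        refine ENNReal.rpow_le_rpow ?_ hp_pos.le
        rw [enorm_smul]
        exact mul_le_of_le_one_left' (by simpa [← ofReal_norm] using hc_le M x))
      (lintegral_rpow_enorm_lt_top_of_eLpNorm_lt_top hp0 hp hg.2).ne
      (.of_forall fun x => by
        have h0 : Tendsto (fun M => ‖c M x • g x‖ₑ) atTop (𝓝 0) := by
          simpa using ((hc_lim x).smul_const (g x)).enorm
        simpa [ENNReal.zero_rpow_of_pos hp_pos] using h0.ennrpow_const p.toReal)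
    simpa only [lintegral_zero] using this
  have := hlim.ennrpow_const (1 / p.toReal)
  rwa [ENNReal.zero_rpow_of_pos (by positivity)] at this

end Lp

section Multiplier

variable {α : Type*} [MeasurableSpace α] {μ : Measure α} {p : ℝ≥0∞} [Fact (1 ≤ p)]
  (F : Lp ℂ p μ ≃ₗᵢ[ℂ] Lp ℂ p μ) {T : ℕ → Lp ℂ p μ →ₗ[ℂ] Lp ℂ p μ} {m : ℕ → α → ℝ}

lemma ae_eq_sum_smul_sub_of_multiplier
    (hT : ∀ k f, (F (T k f) : α → ℂ) =ᵐ[μ] fun x => (m k x : ℂ) * F f x)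
    (ε : ℕ → ℝ) (f : Lp ℂ p μ) (s : Finset ℕ) :
    (F (∑ k ∈ s, (ε k : ℂ) • (T (k + 1) f - T k f)) : α → ℂ) =ᵐ[μ]
      fun x => ((∑ k ∈ s, ε k * (m (k + 1) x - m k x) : ℝ) : ℂ) * F f x := by
  have hterm : ∀ k, (F ((ε k : ℂ) • (T (k + 1) f - T k f)) : α → ℂ) =ᵐ[μ]
      fun x => ((ε k * (m (k + 1) x - m k x) : ℝ) : ℂ) * F f x := fun k => by
    rw [map_smul, map_sub]
    filter_upwards [Lp.coeFn_smul (ε k : ℂ) (F (T (k + 1) f) - F (T k f)),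
      Lp.coeFn_sub (F (T (k + 1) f)) (F (T k f)), hT (k + 1) f, hT k f] with x h1 h2 h3 h4
    simp only [h1, Pi.smul_apply, h2, Pi.sub_apply, h3, h4, smul_eq_mul]
    push_cast
    ring
  rw [map_sum]
  filter_upwards [Lp.coeFn_fun_finsetSum s fun k => F ((ε k : ℂ) • (T (k + 1) f - T k f)),
    ae_all_iff.2 hterm] with x h1 h2
  rw [h1, Complex.ofReal_sum, sum_mul]
  exact sum_congr rfl fun k _ => h2 k

lemma norm_sum_Ioc_smul_sub_le_of_multiplier
    (hT : ∀ k f, (F (T k f) : α → ℂ) =ᵐ[μ] fun x => (m k x : ℂ) * F f x)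
    (hm_nonneg : ∀ k x, 0 ≤ m k x) (hm_le : ∀ k x, m k x ≤ 1)
    (hm_mono : ∀ x, Monotone (m · x)) {ε : ℕ → ℝ} (hε : ∀ k, |ε k| ≤ 1) (f : Lp ℂ p μ) (a b : ℕ) :
    ‖∑ k ∈ Ioc a b, (ε k : ℂ) • (T (k + 1) f - T k f)‖ ≤
      (eLpNorm (fun x => (1 - m (a + 1) x) • (F f : α → ℂ) x) p μ).toReal := by
  have h_abs : ∀ x, |1 - m (a + 1) x| ≤ 1 := fun x =>
    abs_sub_le_of_nonneg_of_le zero_le_one le_rfl (hm_nonneg _ x) (hm_le _ x)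
  rw [← F.norm_map, Lp.norm_def]
  refine ENNReal.toReal_mono ((eLpNorm_smul_le_of_abs_le_one h_abs (F f : α → ℂ)).trans_lt
    (Lp.eLpNorm_lt_top (F f))).ne (eLpNorm_mono_ae ?_)
  filter_upwards [ae_eq_sum_smul_sub_of_multiplier F hT ε f (Ioc a b)] with x hx
  rw [hx, norm_mul, norm_smul, Complex.norm_real, Real.norm_eq_abs, Real.norm_eq_abs,
    abs_of_nonneg (sub_nonneg.2 (hm_le (a + 1) x))]
  gcongr
  exact abs_sum_Ioc_mul_sub_le (hm_mono x) (hm_le · x) hε a b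

theorem exists_tendsto_sum_smul_sub_of_multiplier
    (hT : ∀ k f, (F (T k f) : α → ℂ) =ᵐ[μ] fun x => (m k x : ℂ) * F f x)
    (hp : p ≠ ∞) (hm_meas : ∀ k, AEStronglyMeasurable (m k) μ) (hm_nonneg : ∀ k x, 0 ≤ m k x)
    (hm_le : ∀ k x, m k x ≤ 1) (hm_mono : ∀ x, Monotone (m · x))
    (hm_lim : ∀ x, Tendsto (m · x) atTop (𝓝 1)) {ε : ℕ → ℝ} (hε : ∀ k, |ε k| ≤ 1)
    (f : Lp ℂ p μ) :
    ∃ g : Lp ℂ p μ,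
      Tendsto (fun N => ∑ k ∈ Icc 1 N, (ε k : ℂ) • (T (k + 1) f - T k f)) atTop (𝓝 g) ∧
        ‖g‖ ≤ ‖f‖ := by
  set S := fun N => ∑ k ∈ Ioc 0 N, (ε k : ℂ) • (T (k + 1) f - T k f)
  set t := fun a => (eLpNorm (fun x => (1 - m (a + 1) x) • (F f : α → ℂ) x) p μ).toReal
  have h_abs : ∀ a x, |1 - m (a + 1) x| ≤ 1 := fun a x =>
    abs_sub_le_of_nonneg_of_le zero_le_one le_rfl (hm_nonneg _ x) (hm_le _ x)
  have h_tail := norm_sum_Ioc_smul_sub_le_of_multiplier F hT hm_nonneg hm_le hm_mono hε f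
  have ht : Tendsto t atTop (𝓝 0) := by
    have := tendsto_eLpNorm_smul_of_tendsto_zero (c := fun a x => 1 - m (a + 1) x) hp
      (Lp.memLp (F f))
      (fun a => aestronglyMeasurable_const.sub (hm_meas (a + 1))) h_abs
      (fun x => by simpa using ((hm_lim x).comp (tendsto_add_atTop_nat 1)).const_sub 1)
    have := (ENNReal.tendsto_toReal ENNReal.zero_ne_top).comp this
    rwa [ENNReal.toReal_zero] at this
  have hdist : ∀ N N', N ≤ N' → dist (S N) (S N') ≤ t N := fun N N' h => by
    simp only [S, dist_eq_norm_sub']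
    rw [← sum_Ioc_consecutive _ (Nat.zero_le N) h, add_sub_cancel_left]
    exact h_tail N N'
  have hbound : ∀ N, ‖S N‖ ≤ ‖f‖ := fun N => by
    refine (h_tail 0 N).trans ?_
    rw [← F.norm_map f, Lp.norm_def]
    exact ENNReal.toReal_mono (Lp.eLpNorm_ne_top _) (eLpNorm_smul_le_of_abs_le_one (h_abs 0) _)
  obtain ⟨g, hg⟩ := cauchySeq_tendsto_of_complete (cauchySeq_of_le_tendsto_0' t hdist ht)
  refine ⟨g, ?_, le_of_tendsto' hg.norm hbound⟩
  simpa only [S, ← Icc_add_one_left_eq_Ioc, zero_add] using hg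

end Multiplier

theorem stmt_17_general
    (n : ℕ → ℕ) (hn : ∀ k, 0 < n k) (α : ℝ) (hα : 1 < α)
    (hlac : ∀ k, α ≤ (n (k + 1) : ℝ) / (n k : ℝ))
    -- `F` is the Plancherel (Fourier) transform on `L²(ℝ)`.
    (F : Lp ℂ 2 (volume : Measure ℝ) ≃ₗᵢ[ℂ] Lp ℂ 2 (volume : Measure ℝ))
    -- `σ m` is the Fejér mean: the Fourier multiplier with symbol `fejerSymbol m`.
    (σ : ℕ → (Lp ℂ 2 (volume : Measure ℝ) →ₗ[ℂ] Lp ℂ 2 (volume : Measure ℝ)))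
    (hσ : ∀ m f, (F (σ m f) : ℝ → ℂ) =ᵐ[volume]
      fun x => (fejerSymbol m x : ℂ) * (F f : ℝ → ℂ) x) :
    ∃ C : ℝ, ∀ ε : ℕ → ℝ, (∀ k, ε k = 1 ∨ ε k = -1) →
      ∀ f : Lp ℂ 2 (volume : Measure ℝ),
        ∃ g : Lp ℂ 2 (volume : Measure ℝ),
          Filter.Tendsto
            (fun N => ∑ k ∈ Finset.Icc 1 N, (ε k : ℂ) • (σ (n (k + 1)) f - σ (n k) f))
            Filter.atTop (nhds g) ∧
          ‖g‖ ≤ C * ‖f‖ := by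
  have hmono := strictMono_of_lacunary hn hα hlac
  refine ⟨1, fun ε hε f => ?_⟩
  simpa only [one_mul] using exists_tendsto_sum_smul_sub_of_multiplier F
    (T := fun k => σ (n k)) (m := fun k => fejerSymbol (n k)) (fun k => hσ (n k))
    ENNReal.ofNat_ne_top (fun k => (continuous_fejerSymbol _).aestronglyMeasurable)
    (fun k => fejerSymbol_nonneg _) (fun k => fejerSymbol_le_one _)
    (fun x => (fejerSymbol_monotone x).comp hmono.monotone)
    (fun x => (tendsto_fejerSymbol_atTop x).comp hmono.tendsto_atTop)
    (fun k => by rcases hε k with h | h <;> simp [h]) f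

theorem stmt_17
    (n : ℕ → ℕ) (hn : ∀ k, 0 < n k) (α : ℝ) (hα : 1 < α)
    (hlac : ∀ k, α ≤ (n (k + 1) : ℝ) / (n k : ℝ))
    -- `F` is the Plancherel (Fourier) transform on `L²(ℝ)`.
    (F : Lp ℂ 2 (volume : Measure ℝ) ≃ₗᵢ[ℂ] Lp ℂ 2 (volume : Measure ℝ))
    (hF : ∀ f : Lp ℂ 2 (volume : Measure ℝ), Integrable f volume →
      (F f : ℝ → ℂ) =ᵐ[volume] 𝓕 (f : ℝ → ℂ))
    -- `σ m` is the Fejér mean: the Fourier multiplier with symbol `fejerSymbol m`.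
    (σ : ℕ → (Lp ℂ 2 (volume : Measure ℝ) →ₗ[ℂ] Lp ℂ 2 (volume : Measure ℝ)))
    (hσ : ∀ m f, (F (σ m f) : ℝ → ℂ) =ᵐ[volume]
      fun x => (fejerSymbol m x : ℂ) * (F f : ℝ → ℂ) x) :
    ∃ C : ℝ, ∀ ε : ℕ → ℝ, (∀ k, ε k = 1 ∨ ε k = -1) →
      ∀ f : Lp ℂ 2 (volume : Measure ℝ),
        ∃ g : Lp ℂ 2 (volume : Measure ℝ),
          Filter.Tendsto
            (fun N => ∑ k ∈ Finset.Icc 1 N, (ε k : ℂ) • (σ (n (k + 1)) f - σ (n k) f))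
            Filter.atTop (nhds g) ∧
          ‖g‖ ≤ C * ‖f‖ :=
  stmt_17_general n hn α hα hlac F σ hσ
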